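/- arXiv:math/0503030 — 2 statements merged into one kernel-verified Lean document; each statement's English description precedes it below -/
import Mathlib

section
/- Let n ≥ 6 be even with 4 ∤ n and let D_{2n} be the dihedral group of order 2n. Set Y = {(d+1)/2 : d | n, d odd} ∪ {(d+2)/2 : d | n, d even}. Then D_{2n} is B-decomposable, where B = Y ∪ {(n+6)/4}. -/
/-- `ncc A` is the number of conjugacy classes of `G` contained in the subgroup `A`. -/
noncomputable def ncc {G : Type*} [Group G] (A : Subgroup G) : ℕ :=
  Nat.card {c : ConjClasses G // c.carrier ⊆ (A : Set G)}

/-- `KG G` is the set of values `ncc A` for `A` a proper normal subgroup of `G`. -/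
def KG (G : Type*) [Group G] : Set ℕ :=
  {n | ∃ A : Subgroup G, A.Normal ∧ A ≠ ⊤ ∧ ncc A = n}

/-- `G` is `X`-decomposable if `KG G = X`. -/
def XDecomposable (G : Type*) [Group G] (X : Set ℕ) : Prop := KG G = X

/-!
A proper normal subgroup of `D_{2n}` either consists of rotations, and is then the cyclic
subgroup of order `d` for some `d ∣ n`, or contains a reflection `sr j`. In the latter case it
contains all conjugates `sr (j + 2k)`, hence has index two, and for even `n` it is the kernel of
the parity map `r i ↦ i`, `sr i ↦ i - j` onto `ℤ/2`. The conjugacy classes inside a rotation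
subgroup of order `d` are the pairs `{r i, r (-i)}`, so there are `d / 2 + 1` of them; the
kernel of the parity map adds to those of its rotation subgroup of order `n / 2` the single
class of `sr j`. When `n ≡ 2 mod 4` this gives `(n / 2) / 2 + 2 = (n + 6) / 4`.
-/

section ConjClasses

variable {G : Type*} [Group G]

theorem ConjClasses.mk_mem_image_iff {A : Subgroup G} [A.Normal] {x : G} :
    ConjClasses.mk x ∈ ConjClasses.mk '' (A : Set G) ↔ x ∈ A := by
  refine ⟨?_, fun hx => ⟨x, hx, rfl⟩⟩
  rintro ⟨y, hy, hyx⟩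
  obtain ⟨c, rfl⟩ := isConj_iff.mp (ConjClasses.mk_eq_mk_iff_isConj.mp hyx)
  exact Subgroup.Normal.conj_mem inferInstance y hy c

theorem ncc_eq_ncard_image (A : Subgroup G) [A.Normal] :
    ncc A = (ConjClasses.mk '' (A : Set G)).ncard := by
  rw [ncc, ← Nat.card_coe_set_eq]
  refine Nat.card_congr (Equiv.subtypeEquivRight fun c => ?_)
  obtain ⟨x, rfl⟩ := ConjClasses.mk_surjective c
  rw [ConjClasses.mk_mem_image_iff]
  exact ⟨fun h => h ConjClasses.mem_carrier_mk, fun hx y hy =>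
    ConjClasses.mk_mem_image_iff.mp ⟨x, hx, (ConjClasses.mem_carrier_iff_mk_eq.mp hy).symm⟩⟩

theorem ncc_eq_ncc_add_one [Finite G] {A B : Subgroup G} [A.Normal] [B.Normal] (hBA : B ≤ A)
    (g : G) (hg : ∀ x, x ∈ A ∧ x ∉ B ↔ IsConj g x) : ncc A = ncc B + 1 := by
  have hgB : ConjClasses.mk g ∉ ConjClasses.mk '' (B : Set G) := by
    rw [ConjClasses.mk_mem_image_iff]
    exact ((hg g).mpr (IsConj.refl g)).2
  have hAB : ConjClasses.mk '' (A : Set G) =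
      insert (ConjClasses.mk g) (ConjClasses.mk '' (B : Set G)) := by
    ext c
    obtain ⟨x, rfl⟩ := ConjClasses.mk_surjective c
    rw [Set.mem_insert_iff, ConjClasses.mk_mem_image_iff, ConjClasses.mk_mem_image_iff,
      ConjClasses.mk_eq_mk_iff_isConj, isConj_comm, ← hg]
    by_cases hxB : x ∈ B
    · simp [hxB, hBA hxB]
    · simp [hxB]
  rw [ncc_eq_ncard_image, ncc_eq_ncard_image, hAB, Set.ncard_insert_of_notMem hgB]

end ConjClasses

theorem ZMod.card_range_of_eq_iff_eq_or_eq_neg {d : ℕ} [NeZero d] {β : Type*} (f : ZMod d → β)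
    (hf : ∀ x y, f x = f y ↔ x = y ∨ x = -y) : Nat.card (Set.range f) = d / 2 + 1 := by
  let g : Fin (d / 2 + 1) → Set.range f := fun k => ⟨f (k : ℕ), _, rfl⟩
  suffices g.Bijective by rw [← Nat.card_eq_of_bijective g this, Nat.card_fin]
  constructor
  · intro k l hkl
    have hk := k.isLt
    have hl := l.isLt
    have hd := NeZero.pos d
    rcases (hf _ _).mp (congrArg Subtype.val hkl) with h | h
    · have := congrArg ZMod.val h
      rwa [ZMod.val_cast_of_lt (by omega), ZMod.val_cast_of_lt (by omega), ← Fin.ext_iff] at this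
    · have hdvd : d ∣ k + l :=
        (ZMod.natCast_eq_zero_iff _ _).mp (by push_cast; rw [h, neg_add_cancel])
      rcases Nat.eq_zero_or_pos (k + l) with h0 | hpos
      · exact Fin.ext (by omega)
      · have := Nat.le_of_dvd hpos hdvd
        exact Fin.ext (by omega)
  · rintro ⟨_, x, rfl⟩
    by_cases hx : x.val ≤ d / 2
    · exact ⟨⟨x.val, by omega⟩, Subtype.ext (by simp [g])⟩
    · refine ⟨⟨d - x.val, by omega⟩, Subtype.ext ((hf _ _).mpr (Or.inr ?_))⟩
      simp [Nat.cast_sub x.val_lt.le]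

theorem card_range_of_eq_iff_eq_or_eq_neg {H β : Type*} [AddGroup H] [IsAddCyclic H] [Finite H]
    (f : H → β) (hf : ∀ x y, f x = f y ↔ x = y ∨ x = -y) :
    Nat.card (Set.range f) = Nat.card H / 2 + 1 := by
  have : NeZero (Nat.card H) := ⟨Nat.card_pos.ne'⟩
  let e := zmodAddCyclicAddEquiv (inferInstance : IsAddCyclic H)
  rw [← ZMod.card_range_of_eq_iff_eq_or_eq_neg (f ∘ e) fun x y => by
    simp only [Function.comp_apply, hf, e.injective.eq_iff, ← map_neg]]
  rw [Set.range_comp, e.surjective.range_eq, Set.image_univ]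

theorem ZMod.castHom_eq_zero_iff_even {n : ℕ} [NeZero n] (hn : 2 ∣ n) (i : ZMod n) :
    ZMod.castHom hn (ZMod 2) i = 0 ↔ Even i := by
  constructor
  · intro h
    rw [← ZMod.natCast_zmod_val i, map_natCast, ZMod.natCast_eq_zero_iff_even] at h
    obtain ⟨k, hk⟩ := h
    exact ⟨k, by rw [← ZMod.natCast_zmod_val i, hk, Nat.cast_add]⟩
  · rintro ⟨k, rfl⟩
    rw [map_add, CharTwo.add_self_eq_zero]

theorem ZMod.card_ker_castHom_two {n : ℕ} (hn : 2 ∣ n) :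
    Nat.card (ZMod.castHom hn (ZMod 2)).toAddMonoidHom.ker = n / 2 := by
  have := AddSubgroup.card_mul_index (ZMod.castHom hn (ZMod 2)).toAddMonoidHom.ker
  rw [AddSubgroup.index_ker, AddMonoidHom.range_eq_top.mpr (ZMod.castHom_surjective hn),
    AddSubgroup.card_top, Nat.card_zmod, Nat.card_zmod] at this
  omega

theorem ZMod.card_zmultiples_natCast_div {n d : ℕ} [NeZero n] (hd : d ∣ n) :
    Nat.card (AddSubgroup.zmultiples ((n / d : ℕ) : ZMod n)) = d := by
  rw [Nat.card_zmultiples, ZMod.addOrderOf_coe _ (NeZero.ne n), Nat.gcd_comm,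
    Nat.gcd_eq_left (Nat.div_dvd_of_dvd hd), Nat.div_div_self hd (NeZero.ne n)]

theorem setOf_odd_dvd_union_setOf_even_dvd (n : ℕ) :
    {m : ℕ | ∃ d : ℕ, d ∣ n ∧ Odd d ∧ m = (d + 1) / 2} ∪
        {m : ℕ | ∃ d : ℕ, d ∣ n ∧ Even d ∧ m = (d + 2) / 2} =
      {m | ∃ d, d ∣ n ∧ m = d / 2 + 1} := by
  ext m
  constructor
  · rintro (⟨d, hd, ⟨c, rfl⟩, rfl⟩ | ⟨d, hd, ⟨c, rfl⟩, rfl⟩) <;>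
      exact ⟨_, hd, by omega⟩
  · rintro ⟨d, hd, rfl⟩
    rcases Nat.even_or_odd d with ⟨c, rfl⟩ | ⟨c, rfl⟩
    · exact Or.inr ⟨_, hd, ⟨c, rfl⟩, by omega⟩
    · exact Or.inl ⟨_, hd, ⟨c, rfl⟩, by omega⟩

namespace DihedralGroup

variable {n : ℕ}

theorem isConj_r_iff (i : ZMod n) (x : DihedralGroup n) :
    IsConj (r i) x ↔ x = r i ∨ x = r (-i) := by
  rw [isConj_iff]
  constructor
  · rintro ⟨g, hg⟩
    rcases g with j | j <;> rcases x with k | k <;>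
      simp only [inv_r, inv_sr, r_mul_r, sr_mul_r, sr_mul_sr, r.injEq, reduceCtorEq] at hg
    · exact Or.inl (by rw [← hg]; ring_nf)
    · exact Or.inr (by rw [← hg]; ring_nf)
  · rintro (rfl | rfl)
    · exact ⟨1, by group⟩
    · exact ⟨sr 0, by simp [inv_sr]⟩

theorem isConj_sr_iff (i : ZMod n) (x : DihedralGroup n) :
    IsConj (sr i) x ↔ ∃ k, x = sr (i + 2 * k) := by
  rw [isConj_iff]
  constructor
  · rintro ⟨g, hg⟩
    rcases g with j | j <;> rcases x with k | k <;>
      simp only [inv_r, inv_sr, r_mul_sr, sr_mul_r, sr_mul_sr, sr.injEq, reduceCtorEq] at hg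
    · exact ⟨-j, by rw [← hg]; ring_nf⟩
    · exact ⟨j - i, by rw [← hg]; ring_nf⟩
  · rintro ⟨k, rfl⟩
    refine ⟨r (-k), ?_⟩
    simp only [inv_r, r_mul_sr, sr_mul_r, neg_neg]
    ring_nf

theorem mk_r_eq_mk_r_iff {i k : ZMod n} :
    ConjClasses.mk (r i) = ConjClasses.mk (r k) ↔ i = k ∨ i = -k := by
  rw [ConjClasses.mk_eq_mk_iff_isConj, isConj_comm, isConj_r_iff, r.injEq, r.injEq]

def rotationSubgroup (H : AddSubgroup (ZMod n)) : Subgroup (DihedralGroup n) where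
  carrier := r '' H
  one_mem' := ⟨0, H.zero_mem, rfl⟩
  mul_mem' := by
    rintro _ _ ⟨i, hi, rfl⟩ ⟨j, hj, rfl⟩
    exact ⟨i + j, H.add_mem hi hj, rfl⟩
  inv_mem' := by rintro _ ⟨i, hi, rfl⟩; exact ⟨-i, H.neg_mem hi, rfl⟩

@[simp]
theorem r_mem_rotationSubgroup {H : AddSubgroup (ZMod n)} {i : ZMod n} :
    r i ∈ rotationSubgroup H ↔ i ∈ H := by
  refine ⟨?_, fun hi => ⟨i, hi, rfl⟩⟩
  rintro ⟨j, hj, h⟩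
  cases h
  exact hj

@[simp]
theorem sr_notMem_rotationSubgroup {H : AddSubgroup (ZMod n)} (i : ZMod n) :
    sr i ∉ rotationSubgroup H := by
  rintro ⟨j, -, h⟩
  cases h

instance (H : AddSubgroup (ZMod n)) : (rotationSubgroup H).Normal where
  conj_mem := by
    rintro _ ⟨i, hi, rfl⟩ g
    rcases (isConj_r_iff i _).mp (isConj_iff.mpr ⟨g, rfl⟩) with h | h <;> rw [h]
    · exact ⟨i, hi, rfl⟩
    · exact ⟨-i, H.neg_mem hi, rfl⟩

theorem rotationSubgroup_ne_top (H : AddSubgroup (ZMod n)) : rotationSubgroup H ≠ ⊤ :=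
  fun h => sr_notMem_rotationSubgroup (H := H) 0 (h ▸ Subgroup.mem_top _)

theorem ncc_rotationSubgroup [NeZero n] (H : AddSubgroup (ZMod n)) :
    ncc (rotationSubgroup H) = Nat.card H / 2 + 1 := by
  have himage : ConjClasses.mk '' (rotationSubgroup H : Set (DihedralGroup n)) =
      Set.range fun i : H => ConjClasses.mk (r i) := by
    rw [show (rotationSubgroup H : Set (DihedralGroup n)) = r '' H from rfl, Set.image_image,
      Set.image_eq_range]
    rfl
  rw [ncc_eq_ncard_image, himage, ← Nat.card_coe_set_eq]
  exact card_range_of_eq_iff_eq_or_eq_neg _ fun x y => by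
    rw [mk_r_eq_mk_r_iff, Subtype.ext_iff, Subtype.ext_iff, AddSubgroup.coe_neg]

def rotationPart (A : Subgroup (DihedralGroup n)) : AddSubgroup (ZMod n) where
  carrier := {i | r i ∈ A}
  zero_mem' := A.one_mem
  add_mem' {a b} ha hb := show r (a + b) ∈ A from r_mul_r a b ▸ A.mul_mem ha hb
  neg_mem' {a} ha := show r (-a) ∈ A from inv_r a ▸ A.inv_mem ha

theorem eq_rotationSubgroup_rotationPart {A : Subgroup (DihedralGroup n)}
    (hA : ∀ i, sr i ∉ A) : A = rotationSubgroup (rotationPart A) := by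
  ext (i | i)
  · exact (r_mem_rotationSubgroup (H := rotationPart A)).symm
  · simp [hA]

/-- The kernel is the index-two subgroup generated by `r 2` and `sr j`. -/
def parityHom (hn : 2 ∣ n) (j : ZMod n) : DihedralGroup n →* Multiplicative (ZMod 2) where
  toFun
    | r i => .ofAdd (ZMod.castHom hn (ZMod 2) i)
    | sr i => .ofAdd (ZMod.castHom hn (ZMod 2) (i - j))
  map_one' := congrArg Multiplicative.ofAdd (map_zero (ZMod.castHom hn (ZMod 2)))
  map_mul' := by
    rintro (a | a) (b | b) <;>
      simp only [r_mul_r, r_mul_sr, sr_mul_r, sr_mul_sr, map_add, map_sub, ← ofAdd_add] <;>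
      congr 1 <;> grind

theorem r_mem_ker_parityHom [NeZero n] (hn : 2 ∣ n) {j i : ZMod n} :
    r i ∈ (parityHom hn j).ker ↔ Even i :=
  ofAdd_eq_one.trans (ZMod.castHom_eq_zero_iff_even hn i)

theorem sr_mem_ker_parityHom [NeZero n] (hn : 2 ∣ n) {j i : ZMod n} :
    sr i ∈ (parityHom hn j).ker ↔ Even (i - j) :=
  ofAdd_eq_one.trans (ZMod.castHom_eq_zero_iff_even hn (i - j))

theorem index_ker_parityHom (hn : 2 ∣ n) (j : ZMod n) : (parityHom hn j).ker.index = 2 := by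
  have hsurj : Function.Surjective (parityHom hn j) := fun x => by
    obtain ⟨i, hi⟩ := ZMod.castHom_surjective hn x.toAdd
    exact ⟨r i, congrArg Multiplicative.ofAdd hi⟩
  rw [Subgroup.index_ker, MonoidHom.range_eq_top.mpr hsurj, Subgroup.card_top,
    Nat.card_eq_fintype_card]
  rfl

theorem eq_ker_parityHom [NeZero n] (hn : 2 ∣ n) {j : ZMod n} {A : Subgroup (DihedralGroup n)}
    [hAn : A.Normal] (hA : A ≠ ⊤) (hj : sr j ∈ A) : A = (parityHom hn j).ker := by
  have hconj (k : ZMod n) : sr (j + 2 * k) ∈ A := by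
    obtain ⟨g, hg⟩ := isConj_iff.mp ((isConj_sr_iff j _).mpr ⟨k, rfl⟩)
    exact hg ▸ hAn.conj_mem _ hj g
  have hle : (parityHom hn j).ker ≤ A := by
    rintro (i | i) hi
    · obtain ⟨k, rfl⟩ := (r_mem_ker_parityHom hn).mp hi
      have := A.mul_mem hj (hconj k)
      rwa [sr_mul_sr, add_sub_cancel_left, two_mul] at this
    · obtain ⟨k, hk⟩ := (sr_mem_ker_parityHom hn).mp hi
      exact (show j + 2 * k = i by linear_combination -hk) ▸ hconj k
  refine (hle.lt_or_eq.resolve_left fun hlt => hA ?_).symm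
  have hindex := Subgroup.index_strictAnti hlt
  rw [index_ker_parityHom] at hindex
  have := A.index_ne_zero_of_finite
  exact Subgroup.index_eq_one.mp (by omega)

theorem ncc_ker_parityHom [NeZero n] (hn : 2 ∣ n) (j : ZMod n) :
    ncc (parityHom hn j).ker = n / 2 / 2 + 2 := by
  set H := (ZMod.castHom hn (ZMod 2)).toAddMonoidHom.ker
  have hH {i : ZMod n} : r i ∈ rotationSubgroup H ↔ Even i :=
    r_mem_rotationSubgroup.trans (ZMod.castHom_eq_zero_iff_even hn i)
  have hle : rotationSubgroup H ≤ (parityHom hn j).ker := by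
    rintro (i | i) hi
    · exact (r_mem_ker_parityHom hn).mpr (hH.mp hi)
    · exact absurd hi (sr_notMem_rotationSubgroup i)
  rw [ncc_eq_ncc_add_one hle (sr j), ncc_rotationSubgroup, ZMod.card_ker_castHom_two hn]
  rintro (i | i)
  · simp only [r_mem_ker_parityHom hn, hH, and_not_self, isConj_sr_iff, reduceCtorEq,
      exists_false]
  · simp only [sr_mem_ker_parityHom hn, sr_notMem_rotationSubgroup, not_false_eq_true, and_true,
      isConj_sr_iff, sr.injEq]
    exact ⟨fun ⟨k, hk⟩ => ⟨k, by linear_combination hk⟩,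
      fun ⟨k, hk⟩ => ⟨k, by linear_combination hk⟩⟩

theorem KG_eq_of_even [NeZero n] (hn : 2 ∣ n) :
    KG (DihedralGroup n) = {m | ∃ d, d ∣ n ∧ m = d / 2 + 1} ∪ {n / 2 / 2 + 2} := by
  ext m
  constructor
  · rintro ⟨A, hA, hne, rfl⟩
    by_cases hsr : ∃ j, sr j ∈ A
    · obtain ⟨j, hj⟩ := hsr
      exact Or.inr (by rw [eq_ker_parityHom hn hne hj, ncc_ker_parityHom]; rfl)
    · refine Or.inl ⟨_, ?_, by
        rw [eq_rotationSubgroup_rotationPart (not_exists.mp hsr), ncc_rotationSubgroup]⟩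
      simpa using AddSubgroup.card_addSubgroup_dvd_card (rotationPart A)
  · rintro (⟨d, hd, rfl⟩ | rfl)
    · refine ⟨rotationSubgroup (AddSubgroup.zmultiples ((n / d : ℕ) : ZMod n)), inferInstance,
        rotationSubgroup_ne_top _, ?_⟩
      rw [ncc_rotationSubgroup, ZMod.card_zmultiples_natCast_div hd]
    · refine ⟨(parityHom hn 0).ker, inferInstance, fun htop => ?_, ncc_ker_parityHom hn 0⟩
      simpa [htop] using index_ker_parityHom hn 0

end DihedralGroup

/-- For even `n ≥ 6` with `4 ∤ n`, the dihedral group `D_{2n}` is `B`-decomposable, where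
`B = Y ∪ {(n+6)/4}` and `Y = {(d+1)/2 : d ∣ n, d odd} ∪ {(d+2)/2 : d ∣ n, d even}`. -/
theorem dihedral_four_not_dvd_decomposable (n : ℕ) (hn : 6 ≤ n) (heven : Even n)
    (h4 : ¬ 4 ∣ n) :
    XDecomposable (DihedralGroup n)
      (({m : ℕ | ∃ d : ℕ, d ∣ n ∧ Odd d ∧ m = (d + 1) / 2} ∪
        {m : ℕ | ∃ d : ℕ, d ∣ n ∧ Even d ∧ m = (d + 2) / 2}) ∪ {(n + 6) / 4}) := by
  have : NeZero n := ⟨by omega⟩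
  have h2 : 2 ∣ n := heven.two_dvd
  rw [XDecomposable, DihedralGroup.KG_eq_of_even h2, setOf_odd_dvd_union_setOf_even_dvd,
    show n / 2 / 2 + 2 = (n + 6) / 4 by omega]
end

section
/- Let G be the Frobenius group of order 20, i.e., G = ⟨x, y | x⁴ = y⁵ = 1, x⁻¹yx = y²⟩ (equivalently, the semidirect product of Z₅ by Aut(Z₅) with the natural faithful action). Then G has exactly two proper non-trivial normal subgroups: A = ⟨y⟩ of order 5, which is 2-decomposable, and B = ⟨y, x²⟩ of order 10, which is 3-decomposable; consequently G is {1,2,3}-decomposable. -/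
/-- The Frobenius group of order 20: the semidirect product of `Z₅` by its full automorphism
group `Aut(Z₅) ≅ Z₄` acting naturally (faithfully). This is `SmallGroup(20,3)` in GAP,
i.e. the group `⟨x, y | x⁴ = y⁵ = 1, x⁻¹yx = y²⟩`. -/
def F20 : Type :=
  SemidirectProduct (Multiplicative (ZMod 5)) (MulAut (Multiplicative (ZMod 5)))
    (MonoidHom.id (MulAut (Multiplicative (ZMod 5))))

noncomputable instance : Group F20 :=
  inferInstanceAs (Group (SemidirectProduct _ _ _))


/-!
Let the multiplier `χ : F20 →* (ZMod 5)ˣ` send `(b, z ↦ a z)` to `a`, so that `F20` is the affine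
group of `ZMod 5`. Its kernel `A = ⟨y⟩` has prime order and is its own centralizer. If a normal
subgroup `N` met `A` trivially, then `⁅N, A⁆ ≤ N ⊓ A = ⊥` would force `N ≤ C(A) = A`, so every
nontrivial normal `N` contains `A`. Hence `N` is the preimage of a subgroup of the cyclic group
`(ZMod 5)ˣ` of order `4`, i.e. of the kernel of `u ↦ u ^ d` for some `d ∣ 4`, which leaves `A`,
`B = ker χ²` and the whole group. Counting the conjugacy classes inside `A` and `B` is a finite
computation.
-/

open Subgroup

theorem ncc_bot (G : Type*) [Group G] : ncc (⊥ : Subgroup G) = 1 := by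
  rw [ncc, Nat.card_eq_one_iff_exists]
  refine ⟨⟨ConjClasses.mk 1, fun g hg => ?_⟩, fun ⟨c, hc⟩ => ?_⟩
  · rw [ConjClasses.mem_carrier_iff_mk_eq, ConjClasses.mk_eq_mk_iff_isConj, isConj_one_left] at hg
    exact hg
  · obtain ⟨g, rfl⟩ := ConjClasses.mk_surjective c
    have hg : g = 1 := hc ConjClasses.mem_carrier_mk
    simp only [hg]

theorem ncc_eq_card_image {G : Type*} [Group G] [Fintype G] [DecidableEq G] (A : Subgroup G)
    [hA : A.Normal] [DecidablePred (· ∈ A)] :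
    ncc A = ((Finset.univ.filter (· ∈ A)).image ConjClasses.mk).card := by
  rw [ncc, ← Nat.card_eq_finsetCard]
  refine Nat.card_congr (Equiv.subtypeEquivRight fun c => ?_)
  obtain ⟨g, rfl⟩ := ConjClasses.mk_surjective c
  simp only [Finset.mem_image, Finset.mem_filter, Finset.mem_univ, true_and,
    ConjClasses.mk_eq_mk_iff_isConj]
  refine ⟨fun h => ⟨g, h ConjClasses.mem_carrier_mk, IsConj.refl g⟩, ?_⟩
  rintro ⟨a, ha, hag⟩ b hb
  rw [ConjClasses.mem_carrier_iff_mk_eq, ConjClasses.mk_eq_mk_iff_isConj] at hb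
  obtain ⟨c, rfl⟩ := isConj_iff.1 (hag.trans hb.symm)
  exact hA.conj_mem a ha c

theorem Subgroup.le_of_normal_of_centralizer_le {G : Type*} [Group G] [Finite G]
    {A N : Subgroup G} [A.Normal] [N.Normal] (hA : (Nat.card A).Prime)
    (hAC : centralizer (A : Set G) ≤ A) (hN : N ≠ ⊥) : A ≤ N := by
  have hNA : N ⊓ A ≠ ⊥ := by
    intro h
    have hNC : N ≤ centralizer (A : Set G) :=
      commutator_eq_bot_iff_le_centralizer.1 (le_bot_iff.1 (h ▸ commutator_le_inf N A))
    exact hN (le_bot_iff.1 (h ▸ le_inf le_rfl (hNC.trans hAC)))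
  have hcard : Nat.card (N ⊓ A : Subgroup G) = Nat.card A :=
    ((Nat.dvd_prime hA).1 (card_dvd_of_le inf_le_right)).resolve_left (card_eq_one.not.2 hNA)
  exact inf_eq_right.1 (eq_of_le_of_card_ge inf_le_right hcard.ge)

theorem IsCyclic.eq_ker_powMonoidHom_card {G : Type*} [CommGroup G] [IsCyclic G] [Finite G]
    (H : Subgroup G) : H = (powMonoidHom (Nat.card H) : G →* G).ker := by
  refine eq_of_le_of_card_ge (fun h hh => ?_) ?_
  · exact orderOf_dvd_iff_pow_eq_one.1 (H.orderOf_dvd_natCard hh)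
  · rw [IsCyclic.card_powMonoidHom_ker, Nat.gcd_eq_right (card_subgroup_dvd_card H)]

theorem Subgroup.Normal.eq_ker_powMonoidHom_comp {G U : Type*} [Group G] [Finite G]
    [CommGroup U] [IsCyclic U] [Finite U] {χ : G →* U} (hχ : (Nat.card χ.ker).Prime)
    (hC : centralizer (χ.ker : Set G) ≤ χ.ker) {N : Subgroup G} (hN : N.Normal) (hbot : N ≠ ⊥) :
    ∃ d, d ∣ Nat.card U ∧ N = ((powMonoidHom d).comp χ).ker := by
  refine ⟨Nat.card (N.map χ), card_subgroup_dvd_card _, ?_⟩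
  have := hN
  calc N = (N.map χ).comap χ := (comap_map_eq_self (le_of_normal_of_centralizer_le hχ hC hbot)).symm
    _ = _ := by rw [← MonoidHom.comap_ker, ← IsCyclic.eq_ker_powMonoidHom_card]

-- Unlike `IsCyclic.mulAutMulEquiv`, this is computable, so `decide` can evaluate it.
def ZMod.mulAutEquivUnits (n : ℕ) : MulAut (Multiplicative (ZMod n)) ≃* (ZMod n)ˣ :=
  (MulAutMultiplicative (G := ZMod n)).trans
    ((ZMod.AddAutEquivUnits n).toMultiplicative.trans (MulEquiv.multiplicativeAdditive _))

namespace F20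

open SemidirectProduct

instance : DecidableEq (MulAut (Multiplicative (ZMod 5))) :=
  (ZMod.mulAutEquivUnits 5).injective.decidableEq

instance : Fintype (MulAut (Multiplicative (ZMod 5))) :=
  Fintype.ofEquiv _ (ZMod.mulAutEquivUnits 5).symm.toEquiv

instance : DecidableEq F20 := equivProd.injective.decidableEq

instance : Fintype F20 := Fintype.ofEquiv _ (equivProd (φ := MonoidHom.id _)).symm

instance : IsCyclic (ZMod 5)ˣ := ZMod.isCyclic_units_prime (by norm_num)

noncomputable def multiplier : F20 →* (ZMod 5)ˣ :=
  (ZMod.mulAutEquivUnits 5).toMonoidHom.comp rightHom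

-- `x` acts on `⟨y⟩` as multiplication by `3`, so `x⁻¹ y x = y ^ (3⁻¹) = y ^ 2`.
noncomputable def x : F20 := inr ((ZMod.mulAutEquivUnits 5).symm ⟨3, 2, rfl, rfl⟩)

noncomputable def y : F20 := inl (Multiplicative.ofAdd 1)

noncomputable abbrev A : Subgroup F20 := multiplier.ker

noncomputable abbrev B : Subgroup F20 := ((powMonoidHom 2).comp multiplier).ker

theorem card_eq : Nat.card F20 = 20 := by
  rw [Nat.card_eq_fintype_card]; decide

theorem orderOf_x : orderOf x = 4 :=
  (orderOf_eq_iff (by norm_num)).2 ⟨by decide, by decide⟩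

theorem orderOf_y : orderOf y = 5 :=
  have : Fact (Nat.Prime 5) := ⟨by norm_num⟩
  orderOf_eq_prime (by decide) (by decide)

theorem inv_x_mul_y_mul_x : x⁻¹ * y * x = y ^ 2 := by decide

theorem card_A : Nat.card A = 5 := by
  rw [Nat.card_eq_fintype_card]; decide

theorem card_B : Nat.card B = 10 := by
  rw [Nat.card_eq_fintype_card]; decide

theorem ncc_A : ncc A = 2 := by
  rw [ncc_eq_card_image]; decide

theorem ncc_B : ncc B = 3 := by
  rw [ncc_eq_card_image]; decide

theorem zpowers_y : zpowers y = A :=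
  eq_of_le_of_card_ge (zpowers_le.2 (by decide)) (by rw [Nat.card_zpowers, orderOf_y, card_A])

theorem centralizer_A_le : centralizer (A : Set F20) ≤ A := fun g hg => by
  have key : ∀ g : F20, y * g = g * y → g ∈ A := by decide
  exact key g (mem_centralizer_iff.1 hg y (zpowers_y ▸ mem_zpowers y))

theorem closure_eq_B : closure {y, x ^ 2} = B := by
  have hK : zpowers (multiplier (x ^ 2)) = (powMonoidHom 2).ker := by
    have h2 : orderOf (multiplier (x ^ 2)) = 2 := orderOf_eq_prime (by decide) (by decide)
    rw [IsCyclic.eq_ker_powMonoidHom_card (zpowers _), Nat.card_zpowers, h2]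
  calc closure {y, x ^ 2} = zpowers (x ^ 2) ⊔ zpowers y := by
        rw [zpowers_eq_closure, zpowers_eq_closure, ← Subgroup.closure_union, Set.union_singleton]
    _ = (map multiplier (zpowers (x ^ 2))).comap multiplier := by rw [comap_map_eq, zpowers_y]
    _ = B := by rw [MonoidHom.map_zpowers, hK, MonoidHom.comap_ker]

theorem eq_A_or_eq_B_of_normal {N : Subgroup F20} (hN : N.Normal) (hbot : N ≠ ⊥) (htop : N ≠ ⊤) :
    N = A ∨ N = B := by
  obtain ⟨d, hd, rfl⟩ :=
    hN.eq_ker_powMonoidHom_comp (by rw [card_A]; norm_num) centralizer_A_le hbot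
  replace hd : d ∣ 4 := by rwa [Nat.card_eq_fintype_card] at hd
  have hd4 := Nat.le_of_dvd (by norm_num) hd
  interval_cases d
  · exact absurd hd (by norm_num)
  · exact Or.inl (by ext g; simp)
  · exact Or.inr rfl
  · exact absurd hd (by norm_num)
  · exact absurd ((eq_top_iff' _).2 (by decide)) htop

instance : Nontrivial F20 := ⟨⟨x, 1, by decide⟩⟩

theorem A_ne_top : A ≠ ⊤ := fun h => absurd (h ▸ mem_top x : x ∈ A) (by decide)

theorem B_ne_top : B ≠ ⊤ := fun h => absurd (h ▸ mem_top x : x ∈ B) (by decide)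

theorem KG_eq : KG F20 = {1, 2, 3} := by
  ext n
  constructor
  · rintro ⟨N, hN, htop, rfl⟩
    rcases eq_or_ne N ⊥ with rfl | hbot
    · simp [ncc_bot]
    · rcases eq_A_or_eq_B_of_normal hN hbot htop with rfl | rfl <;> simp [ncc_A, ncc_B]
  · rintro (rfl | rfl | rfl)
    exacts [⟨⊥, inferInstance, bot_ne_top, ncc_bot F20⟩, ⟨A, inferInstance, A_ne_top, ncc_A⟩,
      ⟨B, inferInstance, B_ne_top, ncc_B⟩]

end F20

/-- The Frobenius group of order 20, `⟨x, y | x⁴ = y⁵ = 1, x⁻¹yx = y²⟩`, has exactly two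
proper non-trivial normal subgroups: `A = ⟨y⟩` of order 5, which is 2-decomposable, and
`B = ⟨y, x²⟩` of order 10, which is 3-decomposable; consequently it is
`{1,2,3}`-decomposable. -/
theorem frobenius20_decomposable :
    Nat.card F20 = 20 ∧
    ∃ x y : F20, orderOf x = 4 ∧ orderOf y = 5 ∧ x⁻¹ * y * x = y ^ 2 ∧
      ∀ A B : Subgroup F20, A = Subgroup.zpowers y → B = Subgroup.closure {y, x ^ 2} →
        A.Normal ∧ Nat.card A = 5 ∧ ncc A = 2 ∧
        B.Normal ∧ Nat.card B = 10 ∧ ncc B = 3 ∧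
        (∀ N : Subgroup F20, N.Normal → N ≠ ⊥ → N ≠ ⊤ → N = A ∨ N = B) ∧
        XDecomposable F20 {1, 2, 3} := by
  refine ⟨F20.card_eq, F20.x, F20.y, F20.orderOf_x, F20.orderOf_y, F20.inv_x_mul_y_mul_x, ?_⟩
  rintro _ _ rfl rfl
  rw [F20.zpowers_y, F20.closure_eq_B]
  exact ⟨inferInstance, F20.card_A, F20.ncc_A, inferInstance, F20.card_B, F20.ncc_B,
    fun N hN => F20.eq_A_or_eq_B_of_normal hN, F20.KG_eq⟩
end
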